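/- arXiv:2306.16352 — 3 statements merged into one kernel-verified Lean document; each statement's English description precedes it below -/
import Mathlib

section
/- Let η ∈ (0, 1/2), γ ∈ (0, 1), and let w* ∈ ℝ^d be a unit vector. For any w ∈ ℝ^d, x ∈ ℝ^d with |w*·x| ≥ γ, and y ∈ {−1, 1}, one has (g_η(w; x, y) − g_η(w*; x, y)) · (w − w*) ≥ (1−2η)·γ·1{sign(w·x) ≠ sign(w*·x)}. -/
open scoped RealInnerProductSpace

/-- `sign(t) = 1` if `t ≥ 0` and `-1` otherwise. -/
noncomputable def sgn (t : ℝ) : ℝ := if 0 ≤ t then 1 else -1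

/-- `g_η(w; x, y) := (1/2)·((1−2η)·sign(w·x) − y)·x`. -/
noncomputable def gEta {d : ℕ} (η : ℝ) (w x : EuclideanSpace ℝ (Fin d)) (y : ℝ) :
    EuclideanSpace ℝ (Fin d) :=
  ((1 / 2) * ((1 - 2 * η) * sgn ⟪w, x⟫ - y)) • x

/- The label `y` cancels in the difference, and what is left is the monotonicity defect of `sgn`
along `x`. -/
theorem inner_gEta_sub_gEta {d : ℕ} (η : ℝ) (w v x : EuclideanSpace ℝ (Fin d)) (y : ℝ) :
    ⟪gEta η w x y - gEta η v x y, w - v⟫ =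
      (1 / 2) * (1 - 2 * η) * ((sgn ⟪w, x⟫ - sgn ⟪v, x⟫) * (⟪w, x⟫ - ⟪v, x⟫)) := by
  rw [gEta, gEta, ← sub_smul, real_inner_smul_left, inner_sub_right,
    real_inner_comm x w, real_inner_comm x v]
  ring

/- When the signs differ, `a` and `b` lie on opposite sides of `0`, so `|a - b| ≥ |b|`. -/
theorem two_mul_abs_mul_ite_le_sgn_sub_sgn_mul_sub (a b : ℝ) :
    2 * |b| * (if sgn a ≠ sgn b then (1 : ℝ) else 0) ≤ (sgn a - sgn b) * (a - b) := by
  by_cases hab : sgn a = sgn b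
  · simp [hab]
  · rw [if_pos hab, mul_one]
    unfold sgn at hab ⊢
    rcases le_or_gt 0 a with ha | ha <;> rcases le_or_gt 0 b with hb | hb
    · simp [ha, hb] at hab
    · rw [if_pos ha, if_neg hb.not_ge, abs_of_neg hb]
      linarith
    · rw [if_neg ha.not_ge, if_pos hb, abs_of_nonneg hb]
      linarith
    · simp [ha.not_ge, hb.not_ge] at hab

theorem stmt_3_general {d : ℕ} (η γ : ℝ) (hη : η ∈ Set.Ioo (0 : ℝ) (1 / 2))
    (wstar : EuclideanSpace ℝ (Fin d))
    (w x : EuclideanSpace ℝ (Fin d)) (hx : γ ≤ |⟪wstar, x⟫|)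
    (y : ℝ) :
    (1 - 2 * η) * γ * (if sgn ⟪w, x⟫ ≠ sgn ⟪wstar, x⟫ then (1 : ℝ) else 0) ≤
      ⟪gEta η w x y - gEta η wstar x y, w - wstar⟫ := by
  have hη' : 0 ≤ 1 - 2 * η := by linarith [hη.2]
  have hind : (0 : ℝ) ≤ if sgn ⟪w, x⟫ ≠ sgn ⟪wstar, x⟫ then 1 else 0 := by
    split_ifs <;> norm_num
  rw [inner_gEta_sub_gEta]
  calc (1 - 2 * η) * γ * (if sgn ⟪w, x⟫ ≠ sgn ⟪wstar, x⟫ then (1 : ℝ) else 0)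
      ≤ (1 - 2 * η) * |⟪wstar, x⟫| * (if sgn ⟪w, x⟫ ≠ sgn ⟪wstar, x⟫ then 1 else 0) := by
        gcongr
    _ = (1 / 2) * (1 - 2 * η) *
          (2 * |⟪wstar, x⟫| * (if sgn ⟪w, x⟫ ≠ sgn ⟪wstar, x⟫ then 1 else 0)) := by ring
    _ ≤ _ :=
        mul_le_mul_of_nonneg_left (two_mul_abs_mul_ite_le_sgn_sub_sgn_mul_sub _ _)
          (mul_nonneg (by norm_num) hη')

theorem stmt_3 {d : ℕ} (η γ : ℝ) (hη : η ∈ Set.Ioo (0 : ℝ) (1 / 2))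
    (hγ : γ ∈ Set.Ioo (0 : ℝ) 1)
    (wstar : EuclideanSpace ℝ (Fin d)) (hws : ‖wstar‖ = 1)
    (w x : EuclideanSpace ℝ (Fin d)) (hx : γ ≤ |⟪wstar, x⟫|)
    (y : ℝ) (hy : y = -1 ∨ y = 1) :
    (1 - 2 * η) * γ * (if sgn ⟪w, x⟫ ≠ sgn ⟪wstar, x⟫ then (1 : ℝ) else 0) ≤
      ⟪gEta η w x y - gEta η wstar x y, w - wstar⟫ :=
  stmt_3_general η γ hη wstar w x hx y
end

section
/- There is an absolute constant κ > 0 such that for every c ∈ (0, 1/2) and every sufficiently large d ∈ ℤ₊, there exists a set S ⊆ {±1}^d with |S| ≥ 2^{κ·d^c} such that every pair of distinct vectors v, u ∈ S satisfies |v·u| < d^{1/2 + c}. -/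
/-- The ±1 value of a hypercube coordinate encoded by a boolean. -/
def sgnB (b : Bool) : ℤ := if b then 1 else -1

/-- Inner product `v·u` of two vertices of the hypercube `{±1}^d`. -/
def dotB {d : ℕ} (v u : Fin d → Bool) : ℤ := ∑ i, sgnB (v i) * sgnB (u i)

/-!
Fix `v`. Since `u ↦ v·u` is a sum of `d` independent signs,
`∑ᵤ exp (l v·u) = (2 cosh l)^d ≤ 2^d exp (d l²/2)`, and Markov's inequality with `l = T/d` shows
that at most `2 · 2^d · exp (-T²/(2d))` vectors `u` have `|v·u| ≥ T`. Choosing points greedily,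
each new one avoiding the bad partners of those already chosen, gives `n` pairwise good vectors
as long as `n · 2 exp (-T²/(2d)) < 1`. For `T = d^(1/2+c)` this exponent is `-x²/2` with
`x = d^c`, so `n = ⌈2^x⌉` fits once `x ≥ 4`.
-/

open Finset Real

lemma sgnB_mul_self (b : Bool) : sgnB b * sgnB b = 1 := by
  cases b <;> rfl

lemma dotB_self {d : ℕ} (v : Fin d → Bool) : dotB v v = d := by
  simp [dotB, sgnB_mul_self]

lemma dotB_comm {d : ℕ} (v u : Fin d → Bool) : dotB v u = dotB u v := by
  simp [dotB, mul_comm]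

lemma sum_exp_mul_sgnB_mul (l : ℝ) (a : Bool) :
    ∑ b : Bool, exp (l * ((sgnB a : ℝ) * sgnB b)) = 2 * cosh l := by
  cases a <;> simp [sgnB, cosh_eq] <;> ring

lemma sum_exp_mul_dotB {d : ℕ} (v : Fin d → Bool) (l : ℝ) :
    ∑ u, exp (l * dotB v u) = (2 * cosh l) ^ d := by
  simp_rw [dotB, Int.cast_sum, Int.cast_mul, mul_sum, exp_sum]
  rw [← Fintype.prod_sum fun i b => exp (l * ((sgnB (v i) : ℝ) * sgnB b))]
  simp only [sum_exp_mul_sgnB_mul, prod_const, card_univ, Fintype.card_fin]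

lemma sum_cosh_mul_dotB {d : ℕ} (v : Fin d → Bool) (l : ℝ) :
    ∑ u, cosh (l * dotB v u) = (2 * cosh l) ^ d := by
  rw [show (2 * cosh l) ^ d = ((2 * cosh l) ^ d + (2 * cosh (-l)) ^ d) / 2 by rw [cosh_neg]; ring,
    ← sum_exp_mul_dotB v l, ← sum_exp_mul_dotB v (-l), ← sum_add_distrib, sum_div]
  simp_rw [cosh_eq, neg_mul]

lemma one_le_two_mul_exp_mul_cosh {l T a : ℝ} (hl : 0 ≤ l) (hT : T ≤ |a|) :
    1 ≤ 2 * exp (-(l * T)) * cosh (l * a) := by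
  have : exp (l * T) ≤ 2 * cosh (l * a) := calc
    exp (l * T) ≤ exp |l * a| := by
      rw [abs_mul, abs_of_nonneg hl]; gcongr
    _ ≤ 2 * cosh (l * a) := by
      rw [← cosh_abs (l * a), cosh_eq]; linarith [exp_pos (-|l * a|)]
  rwa [mul_comm 2, mul_assoc, exp_neg, ← div_eq_inv_mul, one_le_div (exp_pos _)]

lemma card_le_abs_dotB_le_exp {d : ℕ} (v : Fin d → Bool) {l : ℝ} (hl : 0 ≤ l) (T : ℝ) :
    (#{u | T ≤ |(dotB v u : ℝ)|} : ℝ) ≤ 2 * exp (-(l * T)) * (2 * cosh l) ^ d := by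
  rw [← sum_cosh_mul_dotB v l, mul_sum, card_eq_sum_ones, Nat.cast_sum, Nat.cast_one]
  calc ∑ u ∈ {u | T ≤ |(dotB v u : ℝ)|}, (1 : ℝ)
      ≤ ∑ u ∈ {u | T ≤ |(dotB v u : ℝ)|}, 2 * exp (-(l * T)) * cosh (l * dotB v u) :=
        sum_le_sum fun u hu => one_le_two_mul_exp_mul_cosh hl (mem_filter.mp hu).2
    _ ≤ ∑ u, 2 * exp (-(l * T)) * cosh (l * dotB v u) :=
        sum_le_sum_of_subset_of_nonneg (filter_subset _ _) fun _ _ _ => by positivity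

lemma card_le_abs_dotB_le {d : ℕ} (hd : 0 < d) (v : Fin d → Bool) {T : ℝ} (hT : 0 ≤ T) :
    (#{u | T ≤ |(dotB v u : ℝ)|} : ℝ) ≤ 2 * 2 ^ d * exp (-(T ^ 2 / (2 * d))) := by
  have hd' : (0 : ℝ) < d := by exact_mod_cast hd
  set l := T / d
  calc (#{u | T ≤ |(dotB v u : ℝ)|} : ℝ) ≤ 2 * exp (-(l * T)) * (2 * cosh l) ^ d :=
        card_le_abs_dotB_le_exp v (by positivity) T
    _ ≤ 2 * exp (-(l * T)) * (2 * exp (l ^ 2 / 2)) ^ d := by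
        gcongr; exact cosh_le_exp_half_sq l
    _ = 2 * 2 ^ d * exp (-(T ^ 2 / (2 * d))) := by
        have : -(T ^ 2 / (2 * d)) = -(l * T) + d * (l ^ 2 / 2) := by
          simp only [l]; field_simp; ring
        rw [mul_pow, ← exp_nat_mul, this, exp_add]
        ring

lemma exists_card_eq_pairwise_not_rel {α : Type*} [Fintype α] [DecidableEq α]
    (r : α → α → Prop) [DecidableRel r] (hrefl : ∀ v, r v v) (hsymm : ∀ v u, r v u → r u v)
    {B : ℕ} (hB : ∀ v, #{u | r v u} ≤ B) {n : ℕ} (hn : n * B < Fintype.card α) :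
    ∃ S : Finset α, #S = n ∧ (S : Set α).Pairwise fun v u => ¬ r v u := by
  induction n with
  | zero => exact ⟨∅, by simp⟩
  | succ n ih =>
    obtain ⟨S, hcard, hS⟩ := ih (lt_of_le_of_lt (by gcongr; omega) hn)
    have hU : #(S.biUnion fun v => {u | r v u}) < #(univ : Finset α) := calc
      _ ≤ ∑ v ∈ S, #{u | r v u} := card_biUnion_le
      _ ≤ n * B := by simpa [hcard] using sum_le_sum fun v (_ : v ∈ S) => hB v
      _ < _ := by rw [card_univ]; exact lt_of_le_of_lt (by gcongr; omega) hn
    obtain ⟨x, -, hx⟩ := exists_mem_notMem_of_card_lt_card hU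
    simp only [mem_biUnion, mem_filter, mem_univ, true_and, not_exists, not_and] at hx
    have hxS : x ∉ S := fun h => hx x h (hrefl x)
    refine ⟨insert x S, by rw [card_insert_of_notMem hxS, hcard], ?_⟩
    rw [coe_insert, Set.pairwise_insert]
    exact ⟨hS, fun v hv _ => ⟨fun h => hx v hv (hsymm _ _ h), hx v hv⟩⟩

lemma exists_card_eq_forall_abs_dotB_lt {d n : ℕ} (hd : 0 < d) {T : ℝ} (hT0 : 0 ≤ T)
    (hTd : T ≤ d) (hn : n * (2 * exp (-(T ^ 2 / (2 * d)))) < 1) :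
    ∃ S : Finset (Fin d → Bool), #S = n ∧ ∀ v ∈ S, ∀ u ∈ S, v ≠ u → |(dotB v u : ℝ)| < T := by
  set b := 2 * 2 ^ d * exp (-(T ^ 2 / (2 * d)))
  have hnb : n * ⌊b⌋₊ < Fintype.card (Fin d → Bool) := by
    have : (n : ℝ) * ⌊b⌋₊ < 2 ^ d := calc
      (n : ℝ) * ⌊b⌋₊ ≤ n * b := by gcongr; exact Nat.floor_le (by positivity)
      _ = 2 ^ d * (n * (2 * exp (-(T ^ 2 / (2 * d))))) := by ring
      _ < 2 ^ d := mul_lt_of_lt_one_right (by positivity) hn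
    simpa using (by exact_mod_cast this : n * ⌊b⌋₊ < 2 ^ d)
  obtain ⟨S, hcard, hS⟩ := exists_card_eq_pairwise_not_rel (fun v u => T ≤ |(dotB v u : ℝ)|)
    (fun v => by simpa [dotB_self] using hTd) (fun v u h => by rwa [dotB_comm])
    (fun v => Nat.le_floor (card_le_abs_dotB_le hd v hT0)) hnb
  exact ⟨S, hcard, fun v hv u hu hvu => not_le.mp (hS hv hu hvu)⟩

lemma four_mul_two_rpow_mul_exp_lt_one {x : ℝ} (hx : 4 ≤ x) :
    4 * 2 ^ x * exp (-(x ^ 2 / 2)) < 1 := by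
  have hlog : log 2 ≤ 1 := by linarith [log_le_sub_one_of_pos (zero_lt_two' ℝ)]
  have h5 : 5 ≤ exp 4 := by linarith [add_one_le_exp (4 : ℝ)]
  calc 4 * 2 ^ x * exp (-(x ^ 2 / 2)) = 4 * exp (log 2 * x - x ^ 2 / 2) := by
        rw [rpow_def_of_pos two_pos, sub_eq_add_neg, exp_add]; ring
    _ ≤ 4 * exp (-4) := by gcongr; nlinarith
    _ < 1 := by rw [exp_neg]; field_simp; linarith

theorem stmt_11 :
    ∃ κ > (0 : ℝ), ∀ c ∈ Set.Ioo (0 : ℝ) (1 / 2), ∃ d₀ : ℕ, ∀ d : ℕ, d₀ ≤ d →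
      ∃ S : Finset (Fin d → Bool),
        (2 : ℝ) ^ (κ * (d : ℝ) ^ c) ≤ S.card ∧
        ∀ v ∈ S, ∀ u ∈ S, v ≠ u → |(dotB v u : ℝ)| < (d : ℝ) ^ ((1 : ℝ) / 2 + c) := by
  refine ⟨1, one_pos, fun c ⟨hc0, hc2⟩ => ⟨⌈(4 : ℝ) ^ c⁻¹⌉₊ + 1, fun d hd => ?_⟩⟩
  have hd1 : (1 : ℝ) ≤ d := by exact_mod_cast (Nat.succ_pos _).trans_le hd
  have hd0 : (0 : ℝ) < d := one_pos.trans_le hd1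
  set x := (d : ℝ) ^ c
  set T := (d : ℝ) ^ ((1 : ℝ) / 2 + c)
  have hx : 4 ≤ x := by
    rw [← rpow_inv_le_iff_of_pos (by norm_num) hd0.le hc0]
    exact (Nat.le_ceil _).trans (by exact_mod_cast (Nat.le_succ _).trans hd)
  have hT : T ^ 2 / (2 * d) = x ^ 2 / 2 := by
    rw [← rpow_natCast, ← rpow_natCast, ← rpow_mul hd0.le, ← rpow_mul hd0.le,
      show ((1 : ℝ) / 2 + c) * (2 : ℕ) = 1 + c * (2 : ℕ) by push_cast; ring, rpow_add hd0, rpow_one]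
    field_simp
  have hn : (⌈(2 : ℝ) ^ x⌉₊ : ℝ) ≤ 2 * 2 ^ x := by
    linarith [Nat.ceil_lt_add_one (rpow_nonneg zero_le_two x),
      one_le_rpow one_le_two (by linarith : 0 ≤ x)]
  obtain ⟨S, hcard, hS⟩ := exists_card_eq_forall_abs_dotB_lt (n := ⌈(2 : ℝ) ^ x⌉₊)
    (Nat.cast_pos.mp hd0) (rpow_nonneg hd0.le _)
    (rpow_le_self_of_one_le hd1 (by linarith : (1 : ℝ) / 2 + c ≤ 1)) (by
      rw [hT]
      calc _ ≤ 2 * 2 ^ x * (2 * exp (-(x ^ 2 / 2))) := by gcongr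
        _ < 1 := by linarith [four_mul_two_rpow_mul_exp_lt_one hx])
  exact ⟨S, by rw [one_mul, hcard]; exact Nat.le_ceil _, hS⟩
end

section
/- Let d, m, k be nonnegative integers with m ≤ d and k ≤ d/2. Then the normalized Kravchuk polynomial satisfies |K(d, m, k)| ≤ e^k · 2^{3k} · ( (k/d)^{k/2} + (|d/2 − m|/d)^k ). -/
/-- The normalized Kravchuk polynomial
`K(n, a, b) = (1/(C(n,a)·C(n,b))) · Σ_{A,B ⊆ [n], |A|=a, |B|=b} (−1)^{|A ∩ B|}`. -/
noncomputable def krav (n a b : ℕ) : ℝ :=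
  (∑ A ∈ Finset.powersetCard a (Finset.univ : Finset (Fin n)),
      ∑ B ∈ Finset.powersetCard b (Finset.univ : Finset (Fin n)),
        (-1 : ℝ) ^ (A ∩ B).card) /
    ((n.choose a) * (n.choose b))

/-!
Fix `A` with `|A| = m`. Giving `i ∈ B` the weight `-1` if `i ∈ A` and `1` otherwise,
`∑_{|B| = k} (-1)^{|A ∩ B|}` is the coefficient of `X^k` in `P = (1 + X)^(n-m) (1 - X)^m`, so
`C(n,k) K(n,m,k) = [X^k] P`. From `(1 - X²) P' = ((n - 2m) - n X) P` one reads off the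
three-term recurrence `(n - k - 1) K_{k+2} = (n - 2m) K_{k+1} - (k + 1) K_k`. While `k + 2 ≤ n/2`
the leading factor is at least `n/2`, so with `s = |n/2 - m|/n`,
`|K_{k+2}| ≤ 4 s |K_{k+1}| + 2 ((k+1)/n) |K_k|`. For `w = max(√(k/n), s)` and `E = 8e`, which
satisfies `4E + 2 ≤ E²`, induction then gives `|K_j| ≤ (E w)^j` for all `j ≤ k`.
-/

open Polynomial Finset

theorem Polynomial.coeff_prod_one_add_C_mul_X {R ι : Type*} [CommRing R] (s : Finset ι)
    (e : ι → R) (k : ℕ) :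
    (∏ i ∈ s, (1 + C (e i) * X)).coeff k = ∑ t ∈ s.powersetCard k, ∏ i ∈ t, e i := by
  classical
  simp only [prod_one_add, prod_mul_distrib, prod_const, ← map_prod, finsetSum_coeff,
    coeff_C_mul_X_pow]
  rw [sum_ite, sum_const_zero, add_zero, powersetCard_eq_filter]
  simp only [eq_comm]

theorem Polynomial.mul_derivative_pow {R : Type*} [CommRing R] (p : R[X]) (n : ℕ) :
    p * derivative (p ^ n) = C (n : R) * derivative p * p ^ n := by
  cases n with
  | zero => simp
  | succ n => rw [derivative_pow_succ]; push_cast; ring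

theorem Polynomial.coeff_add_two_of_ode {R : Type*} [CommRing R] {p : R[X]} {u v : R}
    (hp : (1 - X ^ 2) * derivative p = (C u - C v * X) * p) (k : ℕ) :
    ((k : R) + 2) * p.coeff (k + 2) = u * p.coeff (k + 1) - (v - k) * p.coeff k := by
  have h := congrArg (coeff · (k + 1)) hp
  simp only [sub_mul, one_mul, coeff_sub, coeff_C_mul, mul_assoc, coeff_X_mul, coeff_X_pow_mul',
    coeff_derivative] at h
  rcases k with _ | k
  · simp only [zero_add, Nat.reduceAdd, Nat.cast_one, Nat.not_ofNat_le_one, ↓reduceIte, sub_zero,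
      Nat.cast_zero] at h ⊢
    linear_combination h
  · simp only [show 2 ≤ k + 1 + 1 from by omega, if_true, show k + 1 + 1 - 2 = k from rfl] at h
    push_cast at h ⊢
    linear_combination h

theorem Polynomial.coeff_one_of_ode {R : Type*} [CommRing R] {p : R[X]} {u v : R}
    (hp : (1 - X ^ 2) * derivative p = (C u - C v * X) * p) :
    p.coeff 1 = u * p.coeff 0 := by
  simpa [coeff_derivative] using congrArg (coeff · 0) hp

theorem Real.sqrt_pow_eq_rpow {x : ℝ} (hx : 0 ≤ x) (k : ℕ) : √x ^ k = x ^ ((k : ℝ) / 2) := by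
  rw [Real.sqrt_eq_rpow, ← Real.rpow_natCast, ← Real.rpow_mul hx]
  ring_nf

theorem max_pow_le_add_pow {a b : ℝ} (ha : 0 ≤ a) (hb : 0 ≤ b) (k : ℕ) :
    max a b ^ k ≤ a ^ k + b ^ k := by
  rcases le_total a b with h | h
  · rw [max_eq_right h]; exact le_add_of_nonneg_left (by positivity)
  · rw [max_eq_left h]; exact le_add_of_nonneg_right (by positivity)

theorem abs_le_pow_of_abs_le_two_step {x : ℕ → ℝ} {α β E w : ℝ} {n : ℕ} (hα : 0 ≤ α)
    (hβ : 0 ≤ β) (hE : 0 ≤ E) (hw : 0 ≤ w) (hαβ : α * E + β ≤ E ^ 2) (h0 : |x 0| ≤ 1)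
    (h1 : |x 1| ≤ E * w)
    (hrec : ∀ j, j + 2 ≤ n → |x (j + 2)| ≤ α * w * |x (j + 1)| + β * w ^ 2 * |x j|) :
    ∀ j ≤ n, |x j| ≤ (E * w) ^ j := by
  intro j
  induction j using Nat.twoStepInduction with
  | zero => simpa using h0
  | one => exact fun _ => by simpa using h1
  | more j ih0 ih1 =>
    intro hj
    calc |x (j + 2)| ≤ α * w * (E * w) ^ (j + 1) + β * w ^ 2 * (E * w) ^ j := by
          grw [hrec j hj, ih0 (by omega), ih1 (by omega)]
      _ = (α * E + β) * w ^ 2 * (E * w) ^ j := by ring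
      _ ≤ E ^ 2 * w ^ 2 * (E * w) ^ j := by gcongr
      _ = (E * w) ^ (j + 2) := by ring

noncomputable def kravGen (n m : ℕ) : ℝ[X] := (1 + X) ^ (n - m) * (1 - X) ^ m

theorem kravGen_coeff_zero (n m : ℕ) : (kravGen n m).coeff 0 = 1 := by
  simp [kravGen, coeff_zero_eq_eval_zero]

theorem derivative_kravGen {n m : ℕ} (hm : m ≤ n) :
    (1 - X ^ 2) * derivative (kravGen n m) =
      (C ((n : ℝ) - 2 * m) - C (n : ℝ) * X) * kravGen n m := by
  have ha := mul_derivative_pow (1 + X : ℝ[X]) (n - m)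
  have hb := mul_derivative_pow (1 - X : ℝ[X]) m
  simp only [derivative_add, derivative_sub, derivative_one, derivative_X] at ha hb
  rw [kravGen, derivative_mul, Nat.cast_sub hm] at *
  simp only [map_sub, map_mul, map_natCast, map_ofNat] at ha hb ⊢
  linear_combination (1 - X) * (1 - X) ^ m * ha + (1 + X) * (1 + X) ^ (n - m) * hb

theorem sum_neg_one_pow_card_inter {ι : Type*} [Fintype ι] [DecidableEq ι] (A : Finset ι)
    (k : ℕ) :
    ∑ B ∈ powersetCard k (univ : Finset ι), (-1 : ℝ) ^ #(A ∩ B) =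
      (kravGen (Fintype.card ι) #A).coeff k := by
  set e : ι → ℝ := fun i => if i ∈ A then -1 else 1
  have hA : ∏ i ∈ A, (1 + C (e i) * X) = (1 - X) ^ #A := by
    rw [← prod_const]
    exact prod_congr rfl fun i hi => by simp [e, hi, ← sub_eq_add_neg]
  have hAc : ∏ i ∈ Aᶜ, (1 + C (e i) * X) = (1 + X) ^ (Fintype.card ι - #A) := by
    rw [← card_compl, ← prod_const]
    exact prod_congr rfl fun i hi => by simp [e, mem_compl.1 hi]
  rw [kravGen, ← hA, ← hAc, mul_comm, prod_mul_prod_compl, coeff_prod_one_add_C_mul_X]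
  refine sum_congr rfl fun B _ => ?_
  rw [prod_ite_mem B A, prod_const, inter_comm]

theorem krav_eq_coeff_div {n m : ℕ} (hm : m ≤ n) (k : ℕ) :
    krav n m k = (kravGen n m).coeff k / n.choose k := by
  have hA : ∀ A ∈ powersetCard m (univ : Finset (Fin n)),
      ∑ B ∈ powersetCard k univ, (-1 : ℝ) ^ #(A ∩ B) = (kravGen n m).coeff k := fun A hA => by
    rw [sum_neg_one_pow_card_inter, Fintype.card_fin, (mem_powersetCard.1 hA).2]
  rw [krav, sum_congr rfl hA, sum_const, card_powersetCard, card_univ, Fintype.card_fin,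
    nsmul_eq_mul, mul_div_mul_left _ _ (by exact_mod_cast (Nat.choose_pos hm).ne')]

theorem krav_zero_right {n m : ℕ} (hm : m ≤ n) : krav n m 0 = 1 := by
  simp [krav_eq_coeff_div hm, kravGen_coeff_zero]

theorem krav_one_right {n m : ℕ} (hm : m ≤ n) : krav n m 1 = (n - 2 * m) / n := by
  rw [krav_eq_coeff_div hm, coeff_one_of_ode (derivative_kravGen hm), kravGen_coeff_zero,
    Nat.choose_one_right, mul_one]

theorem abs_krav_one_right {n m : ℕ} (hm : m ≤ n) :
    |krav n m 1| = 2 * (|(n : ℝ) / 2 - m| / n) := by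
  rw [krav_one_right hm, show (n : ℝ) - 2 * m = 2 * (n / 2 - m) by ring, mul_div_assoc, abs_mul,
    abs_two, abs_div, Nat.abs_cast]

theorem krav_add_two {n m j : ℕ} (hm : m ≤ n) (hj : j + 2 ≤ n) :
    ((n : ℝ) - (j + 1)) * krav n m (j + 2) =
      (n - 2 * m) * krav n m (j + 1) - (j + 1) * krav n m j := by
  have hcoeff : ∀ i ≤ n, (kravGen n m).coeff i = krav n m i * n.choose i := fun i hi => by
    rw [krav_eq_coeff_div hm, div_mul_cancel₀ _ (by exact_mod_cast (Nat.choose_pos hi).ne')]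
  have hchoose : ∀ i ≤ n, (n.choose (i + 1) : ℝ) * (i + 1) = n.choose i * (n - i) := fun i hi => by
    rw [← Nat.cast_sub hi]; exact_mod_cast Nat.choose_succ_right_eq n i
  have hrec := coeff_add_two_of_ode (derivative_kravGen hm) j
  rw [hcoeff _ hj, hcoeff _ (by omega), hcoeff _ (by omega)] at hrec
  have hchoose_ne : (n.choose (j + 1) : ℝ) ≠ 0 := by exact_mod_cast (Nat.choose_pos (by omega)).ne'
  have h1 := hchoose (j + 1) (by omega)
  have h0 := hchoose j (by omega)
  push_cast at h1
  refine mul_left_cancel₀ hchoose_ne ?_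
  linear_combination hrec - krav n m (j + 2) * h1 + krav n m j * h0

theorem abs_krav_add_two_le {n m j : ℕ} (hm : m ≤ n) (hj : (j : ℝ) + 2 ≤ n / 2) :
    |krav n m (j + 2)| ≤
      4 * (|(n : ℝ) / 2 - m| / n) * |krav n m (j + 1)| + 2 * ((j + 1) / n) * |krav n m j| := by
  have hn : (0 : ℝ) < n := by linarith
  have hgap : (n : ℝ) / 2 ≤ n - (j + 1) := by linarith
  have hrec := krav_add_two hm (j := j) (by exact_mod_cast (by linarith : (j : ℝ) + 2 ≤ n))
  have hK : krav n m (j + 2) =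
      ((n - 2 * m) * krav n m (j + 1) - (j + 1) * krav n m j) / (n - (j + 1)) := by
    rw [eq_div_iff (by linarith)]; linarith
  calc |krav n m (j + 2)|
      = |(n - 2 * m) * krav n m (j + 1) - (j + 1) * krav n m j| / (n - (j + 1)) := by
        rw [hK, abs_div, abs_of_pos (a := (n : ℝ) - (j + 1)) (by linarith)]
    _ ≤ (|(n : ℝ) - 2 * m| * |krav n m (j + 1)| + (j + 1) * |krav n m j|) / (n / 2) := by
        gcongr
        refine (abs_sub _ _).trans_eq ?_
        rw [abs_mul, abs_mul, abs_of_pos (by positivity : (0 : ℝ) < j + 1)]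
    _ = 4 * (|(n : ℝ) / 2 - m| / n) * |krav n m (j + 1)| + 2 * ((j + 1) / n) * |krav n m j| := by
        rw [show (n : ℝ) - 2 * m = 2 * (n / 2 - m) by ring, abs_mul, abs_two]
        field_simp
        ring

theorem abs_krav_le_pow {n m k : ℕ} (hm : m ≤ n) (hk : (k : ℝ) ≤ n / 2) {E : ℝ} (hE0 : 0 ≤ E)
    (hE : 4 * E + 2 ≤ E ^ 2) :
    |krav n m k| ≤ (E * max √((k : ℝ) / n) (|(n : ℝ) / 2 - m| / n)) ^ k := by
  set s := |(n : ℝ) / 2 - m| / n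
  set r := √((k : ℝ) / n)
  have hsw : s ≤ max r s := le_max_right _ _
  refine abs_le_pow_of_abs_le_two_step (α := 4) (β := 2) (by norm_num) (by norm_num) hE0
    ((by positivity : 0 ≤ s).trans hsw) (by linarith) (by simp [krav_zero_right hm]) ?_ ?_ k le_rfl
  · rw [abs_krav_one_right hm]
    gcongr
    nlinarith
  · intro j hj
    have hjk : (j : ℝ) + 2 ≤ k := by exact_mod_cast hj
    have hj1 : ((j : ℝ) + 1) / n ≤ max r s ^ 2 := calc
      ((j : ℝ) + 1) / n ≤ k / n := by gcongr; linarith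
      _ = r ^ 2 := (Real.sq_sqrt (by positivity)).symm
      _ ≤ max r s ^ 2 := by gcongr; exact le_max_left _ _
    refine (abs_krav_add_two_le hm (by linarith)).trans ?_
    change 4 * s * _ + _ ≤ _
    gcongr

theorem stmt_12 (d m k : ℕ) (hm : m ≤ d) (hk : (k : ℝ) ≤ (d : ℝ) / 2) :
    |krav d m k| ≤
      Real.exp 1 ^ k * 2 ^ (3 * k) *
        (((k : ℝ) / d) ^ ((k : ℝ) / 2) + (|(d : ℝ) / 2 - m| / d) ^ k) := by
  have hE : 16 ≤ Real.exp 1 * 2 ^ 3 := by linarith [Real.add_one_le_exp 1]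
  calc |krav d m k|
      ≤ (Real.exp 1 * 2 ^ 3 * max √((k : ℝ) / d) (|(d : ℝ) / 2 - m| / d)) ^ k :=
        abs_krav_le_pow hm hk (by positivity) (by nlinarith)
    _ = Real.exp 1 ^ k * 2 ^ (3 * k) * max √((k : ℝ) / d) (|(d : ℝ) / 2 - m| / d) ^ k := by
        rw [mul_pow, mul_pow, ← pow_mul]
    _ ≤ _ := by
        rw [← Real.sqrt_pow_eq_rpow (by positivity)]
        gcongr
        exact max_pow_le_add_pow (Real.sqrt_nonneg _) (by positivity) k
end
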